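/- arXiv:0811.1539 — 3 statements merged into one kernel-verified Lean document; each statement's English description precedes it below -/
import Mathlib

section
/- For the Majorana–Weyl spinor ε = 1 + e₁∧e₂∧e₃∧e₄ ∈ Λ^{even}(ℂ⁵), the one-form bilinear k ∈ ℝ^{10} with components k_A = B(ε, Γ_A ε), A = 0,…,9, is real, nonzero, and null with respect to the Minkowski metric: its only possibly nonvanishing components are k₀ and k₅, these satisfy k₅ = −k₀ ≠ 0, and hence η^{AB} k_A k_B = −k₀² + k₅² = 0. -/
/-!
The space of Dirac spinors `Δ_c = Λ*(ℂ⁵)` is modelled by coefficient functions on the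
monomial basis `e_{i₁} ∧ ⋯ ∧ e_{i_k}` (`i₁ < ⋯ < i_k`), i.e. by `Finset (Fin 5) → ℂ`
(the basis monomials being orthonormal for the Hermitian inner product).
`W i` is the wedge operator `e_{i+1} ∧ ·` and `C i` the interior multiplication
`e_{i+1} ⌟ ·` (its adjoint).  The operators `Γ 0, …, Γ 9` are defined by
`Γ₀ψ = −e₅∧ψ + e₅⌟ψ`, `Γ₅ψ = e₅∧ψ + e₅⌟ψ`, `Γᵢψ = eᵢ∧ψ + eᵢ⌟ψ`,
`Γ₅₊ᵢψ = i eᵢ∧ψ − i eᵢ⌟ψ` for `i = 1,…,4`.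
-/

/-- Coefficients of a spinor in `Λ*(ℂ⁵)` with respect to the monomial basis. -/
abbrev SpinorCpx : Type := Finset (Fin 5) → ℂ

/-- The sign `(−1)^{#{j ∈ S : j < i}}` arising when moving `e_i` past a monomial. -/
noncomputable def wedgeSign (i : Fin 5) (S : Finset (Fin 5)) : ℂ :=
  (-1 : ℂ) ^ (S.filter (fun j => j < i)).card

/-- The wedge operator `e_{i+1} ∧ ·` on `Λ*(ℂ⁵)` in the monomial basis. -/
noncomputable def W (i : Fin 5) : SpinorCpx →ₗ[ℂ] SpinorCpx where
  toFun ψ := fun S => if i ∈ S then wedgeSign i S * ψ (S.erase i) else 0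
  map_add' ψ θ := by
    funext S; by_cases h : i ∈ S <;> simp [h, mul_add]
  map_smul' a ψ := by
    funext S; by_cases h : i ∈ S <;> simp [h] <;> ring

/-- The interior multiplication `e_{i+1} ⌟ ·` on `Λ*(ℂ⁵)`, the Hermitian adjoint of `W i`. -/
noncomputable def C (i : Fin 5) : SpinorCpx →ₗ[ℂ] SpinorCpx where
  toFun ψ := fun S => if i ∈ S then 0 else wedgeSign i S * ψ (insert i S)
  map_add' ψ θ := by
    funext S; by_cases h : i ∈ S <;> simp [h, mul_add]
  map_smul' a ψ := by
    funext S; by_cases h : i ∈ S <;> simp [h] <;> ring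

/-- The gamma operators `Γ₀, …, Γ₉` on `Δ_c = Λ*(ℂ⁵)`.  (Here `e₁, …, e₅` correspond to
the basis indices `0, …, 4` of `Fin 5`.) -/
noncomputable def Γ : Fin 10 → (SpinorCpx →ₗ[ℂ] SpinorCpx) :=
  ![ -W 4 + C 4,
     W 0 + C 0, W 1 + C 1, W 2 + C 2, W 3 + C 3,
     W 4 + C 4,
     Complex.I • W 0 - Complex.I • C 0,
     Complex.I • W 1 - Complex.I • C 1,
     Complex.I • W 2 - Complex.I • C 2,
     Complex.I • W 3 - Complex.I • C 3 ]


/-- The antilinear involution `K` of `Λ*(ℂ⁵)` fixing each basis monomial and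
conjugating scalar coefficients. -/
noncomputable def K (ψ : SpinorCpx) : SpinorCpx := fun S => starRingEnd ℂ (ψ S)

/-- The Hermitian inner product `⟨·,·⟩` on `Δ_c = Λ*(ℂ⁵)` (antilinear in the first
argument) making the basis monomials orthonormal. -/
noncomputable def herm (ψ θ : SpinorCpx) : ℂ :=
  ∑ S : Finset (Fin 5), starRingEnd ℂ (ψ S) * θ S

/-- The Majorana bilinear form `B(ψ,θ) = ⟨Γ₀Γ₆Γ₇Γ₈Γ₉ K(ψ), θ⟩` on `Δ_c`. -/
noncomputable def Bform (ψ θ : SpinorCpx) : ℂ :=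
  herm (Γ 0 (Γ 6 (Γ 7 (Γ 8 (Γ 9 (K ψ)))))) θ

/-- The Majorana–Weyl spinor `ε = 1 + e₁∧e₂∧e₃∧e₄ ∈ Λ^{even}(ℂ⁵)` (the basis indices
`0,1,2,3` of `Fin 5` correspond to `e₁,e₂,e₃,e₄`). -/
noncomputable def εspinor : SpinorCpx := fun S =>
  if S = (∅ : Finset (Fin 5)) ∨ S = ({0, 1, 2, 3} : Finset (Fin 5)) then 1 else 0

/-- The one-form bilinear `k_A = B(ε, Γ_A ε)`, `A = 0,…,9`. -/
noncomputable def kvec (A : Fin 10) : ℂ := Bform εspinor (Γ A εspinor)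

lemma univ_finset_fin5 : (Finset.univ : Finset (Finset (Fin 5))) = {(∅ : Finset (Fin 5)), ({0} : Finset (Fin 5)), ({1} : Finset (Fin 5)), ({2} : Finset (Fin 5)), ({3} : Finset (Fin 5)), ({4} : Finset (Fin 5)), ({0, 1} : Finset (Fin 5)), ({0, 2} : Finset (Fin 5)), ({0, 3} : Finset (Fin 5)), ({0, 4} : Finset (Fin 5)), ({1, 2} : Finset (Fin 5)), ({1, 3} : Finset (Fin 5)), ({1, 4} : Finset (Fin 5)), ({2, 3} : Finset (Fin 5)), ({2, 4} : Finset (Fin 5)), ({3, 4} : Finset (Fin 5)), ({0, 1, 2} : Finset (Fin 5)), ({0, 1, 3} : Finset (Fin 5)), ({0, 1, 4} : Finset (Fin 5)), ({0, 2, 3} : Finset (Fin 5)), ({0, 2, 4} : Finset (Fin 5)), ({0, 3, 4} : Finset (Fin 5)), ({1, 2, 3} : Finset (Fin 5)), ({1, 2, 4} : Finset (Fin 5)), ({1, 3, 4} : Finset (Fin 5)), ({2, 3, 4} : Finset (Fin 5)), ({0, 1, 2, 3} : Finset (Fin 5)), ({0, 1, 2, 4} : Finset (Fin 5)), ({0,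 1, 3, 4} : Finset (Fin 5)), ({0, 2, 3, 4} : Finset (Fin 5)), ({1, 2, 3, 4} : Finset (Fin 5)), ({0, 1, 2, 3, 4} : Finset (Fin 5))} := by decide

lemma sum_fin5 (f : Finset (Fin 5) → ℂ) : ∑ S : Finset (Fin 5), f S = f (∅ : Finset (Fin 5)) + f ({0} : Finset (Fin 5)) + f ({1} : Finset (Fin 5)) + f ({2} : Finset (Fin 5)) + f ({3} : Finset (Fin 5)) + f ({4} : Finset (Fin 5)) + f ({0, 1} : Finset (Fin 5)) + f ({0, 2} : Finset (Fin 5)) + f ({0, 3} : Finset (Fin 5)) + f ({0, 4} : Finset (Fin 5)) + f ({1, 2} : Finset (Fin 5)) + f ({1, 3} : Finset (Fin 5)) + f ({1, 4} : Finset (Fin 5)) + f ({2, 3} : Finset (Fin 5)) + f ({2, 4} : Finset (Fin 5)) + f ({3, 4} : Finset (Fin 5)) + f ({0, 1, 2} : Finset (Fin 5)) + f ({0, 1, 3} : Finset (Fin 5)) + f ({0, 1, 4} : Finset (Fin 5)) + f ({0, 2, 3} : Finset (Fin 5)) + f ({0, 2, 4} : Finset (Fin 5)) + f ({0, 3, 4}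 : Finset (Fin 5)) + f ({1, 2, 3} : Finset (Fin 5)) + f ({1, 2, 4} : Finset (Fin 5)) + f ({1, 3, 4} : Finset (Fin 5)) + f ({2, 3, 4} : Finset (Fin 5)) + f ({0, 1, 2, 3} : Finset (Fin 5)) + f ({0, 1, 2, 4} : Finset (Fin 5)) + f ({0, 1, 3, 4} : Finset (Fin 5)) + f ({0, 2, 3, 4} : Finset (Fin 5)) + f ({1, 2, 3, 4} : Finset (Fin 5)) + f ({0, 1, 2, 3, 4} : Finset (Fin 5)) := by
  rw [univ_finset_fin5]
  simp (config := { decide := true }) [Finset.sum_insert]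
  ring

lemma Γl0 : Γ 0 = -W 4 + C 4 := rfl
lemma Γl1 : Γ 1 = W 0 + C 0 := rfl
lemma Γl2 : Γ 2 = W 1 + C 1 := rfl
lemma Γl3 : Γ 3 = W 2 + C 2 := rfl
lemma Γl4 : Γ 4 = W 3 + C 3 := rfl
lemma Γl5 : Γ 5 = W 4 + C 4 := rfl
lemma Γl6 : Γ 6 = Complex.I • W 0 - Complex.I • C 0 := rfl
lemma Γl7 : Γ 7 = Complex.I • W 1 - Complex.I • C 1 := rfl
lemma Γl8 : Γ 8 = Complex.I • W 2 - Complex.I • C 2 := rfl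
lemma Γl9 : Γ 9 = Complex.I • W 3 - Complex.I • C 3 := rfl

lemma wedgeSign_eval (i : Fin 5) (S : Finset (Fin 5)) :
    wedgeSign i S = if Even (S.filter (fun j => j < i)).card then 1 else -1 := by
  unfold wedgeSign
  rcases Nat.even_or_odd (S.filter (fun j => j < i)).card with h | h
  · simp [h, Even.neg_one_pow]
  · simp [h.neg_one_pow, Nat.not_even_iff_odd.2 h]

lemma stepK : K εspinor = εspinor := by
  funext S
  simp only [K, εspinor]
  split <;> simp
set_option maxHeartbeats 1000000 in
lemma step_psi2 : Γ 9 εspinor = (fun S => if S = ({3} : Finset (Fin 5)) then Complex.I else if S = ({0, 1, 2} : Finset (Fin 5)) then Complex.I else 0) := by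
  funext S
  fin_cases S <;>
  · simp (config := {decide := true}) [Γl9, W, C, εspinor, wedgeSign_eval,
      LinearMap.add_apply, LinearMap.neg_apply, LinearMap.sub_apply, LinearMap.smul_apply,
      Pi.add_apply, Pi.neg_apply, Pi.sub_apply, Pi.smul_apply,
      LinearMap.coe_mk, AddHom.coe_mk]

set_option maxHeartbeats 1000000 in
lemma step_psi3 : Γ 8 (fun S => if S = ({3} : Finset (Fin 5)) then Complex.I else if S = ({0, 1, 2} : Finset (Fin 5)) then Complex.I else 0) = (fun S => if S = ({0, 1} : Finset (Fin 5)) then 1 else if S = ({2, 3} : Finset (Fin 5)) then (-1) else 0) := by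
  funext S
  fin_cases S <;>
  · simp (config := {decide := true}) [Γl8, W, C, εspinor, wedgeSign_eval,
      LinearMap.add_apply, LinearMap.neg_apply, LinearMap.sub_apply, LinearMap.smul_apply,
      Pi.add_apply, Pi.neg_apply, Pi.sub_apply, Pi.smul_apply,
      LinearMap.coe_mk, AddHom.coe_mk]

set_option maxHeartbeats 1000000 in
lemma step_psi4 : Γ 7 (fun S => if S = ({0, 1} : Finset (Fin 5)) then 1 else if S = ({2, 3} : Finset (Fin 5)) then (-1) else 0) = (fun S => if S = ({0} : Finset (Fin 5)) then Complex.I else if S = ({1, 2, 3} : Finset (Fin 5)) then (-Complex.I) else 0) := by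
  funext S
  fin_cases S <;>
  · simp (config := {decide := true}) [Γl7, W, C, εspinor, wedgeSign_eval,
      LinearMap.add_apply, LinearMap.neg_apply, LinearMap.sub_apply, LinearMap.smul_apply,
      Pi.add_apply, Pi.neg_apply, Pi.sub_apply, Pi.smul_apply,
      LinearMap.coe_mk, AddHom.coe_mk]

set_option maxHeartbeats 1000000 in
lemma step_psi5 : Γ 6 (fun S => if S = ({0} : Finset (Fin 5)) then Complex.I else if S = ({1, 2, 3} : Finset (Fin 5)) then (-Complex.I) else 0) = (fun S => if S = (∅ : Finset (Fin 5)) then 1 else if S = ({0, 1, 2, 3} : Finset (Fin 5)) then 1 else 0) := by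
  funext S
  fin_cases S <;>
  · simp (config := {decide := true}) [Γl6, W, C, εspinor, wedgeSign_eval,
      LinearMap.add_apply, LinearMap.neg_apply, LinearMap.sub_apply, LinearMap.smul_apply,
      Pi.add_apply, Pi.neg_apply, Pi.sub_apply, Pi.smul_apply,
      LinearMap.coe_mk, AddHom.coe_mk]

set_option maxHeartbeats 1000000 in
lemma step_phiSp : Γ 0 (fun S => if S = (∅ : Finset (Fin 5)) then 1 else if S = ({0, 1, 2, 3} : Finset (Fin 5)) then 1 else 0) = (fun S => if S = ({4} : Finset (Fin 5)) then (-1) else if S = ({0, 1, 2, 3, 4} : Finset (Fin 5)) then (-1) else 0) := by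
  funext S
  fin_cases S <;>
  · simp (config := {decide := true}) [Γl0, W, C, εspinor, wedgeSign_eval,
      LinearMap.add_apply, LinearMap.neg_apply, LinearMap.sub_apply, LinearMap.smul_apply,
      Pi.add_apply, Pi.neg_apply, Pi.sub_apply, Pi.smul_apply,
      LinearMap.coe_mk, AddHom.coe_mk]

lemma phi_eval : Γ 0 (Γ 6 (Γ 7 (Γ 8 (Γ 9 (K εspinor))))) = (fun S => if S = ({4} : Finset (Fin 5)) then (-1) else if S = ({0, 1, 2, 3, 4} : Finset (Fin 5)) then (-1) else 0) := by
  rw [stepK, step_psi2, step_psi3, step_psi4, step_psi5, step_phiSp]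

set_option maxHeartbeats 1000000 in
lemma herm_phi (θ : SpinorCpx) : herm (fun S => if S = ({4} : Finset (Fin 5)) then (-1) else if S = ({0, 1, 2, 3, 4} : Finset (Fin 5)) then (-1) else 0) θ =
    -(θ ({4} : Finset (Fin 5))) - θ ({0, 1, 2, 3, 4} : Finset (Fin 5)) := by
  simp only [herm, sum_fin5]
  simp (config := {decide := true})
  ring

set_option maxHeartbeats 1000000 in
lemma kvec_0 : kvec 0 = 2 := by
  rw [kvec, Bform, phi_eval, herm_phi]
  simp (config := {decide := true}) [Γl0, W, C, εspinor, wedgeSign_eval,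
    LinearMap.add_apply, LinearMap.neg_apply, LinearMap.sub_apply, LinearMap.smul_apply,
    Pi.add_apply, Pi.neg_apply, Pi.sub_apply, Pi.smul_apply,
    LinearMap.coe_mk, AddHom.coe_mk]
  all_goals norm_num

set_option maxHeartbeats 1000000 in
lemma kvec_1 : kvec 1 = 0 := by
  rw [kvec, Bform, phi_eval, herm_phi]
  simp (config := {decide := true}) [Γl1, W, C, εspinor, wedgeSign_eval,
    LinearMap.add_apply, LinearMap.neg_apply, LinearMap.sub_apply, LinearMap.smul_apply,
    Pi.add_apply, Pi.neg_apply, Pi.sub_apply, Pi.smul_apply,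
    LinearMap.coe_mk, AddHom.coe_mk]
  all_goals norm_num

set_option maxHeartbeats 1000000 in
lemma kvec_2 : kvec 2 = 0 := by
  rw [kvec, Bform, phi_eval, herm_phi]
  simp (config := {decide := true}) [Γl2, W, C, εspinor, wedgeSign_eval,
    LinearMap.add_apply, LinearMap.neg_apply, LinearMap.sub_apply, LinearMap.smul_apply,
    Pi.add_apply, Pi.neg_apply, Pi.sub_apply, Pi.smul_apply,
    LinearMap.coe_mk, AddHom.coe_mk]
  all_goals norm_num

set_option maxHeartbeats 1000000 in
lemma kvec_3 : kvec 3 = 0 := by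
  rw [kvec, Bform, phi_eval, herm_phi]
  simp (config := {decide := true}) [Γl3, W, C, εspinor, wedgeSign_eval,
    LinearMap.add_apply, LinearMap.neg_apply, LinearMap.sub_apply, LinearMap.smul_apply,
    Pi.add_apply, Pi.neg_apply, Pi.sub_apply, Pi.smul_apply,
    LinearMap.coe_mk, AddHom.coe_mk]
  all_goals norm_num

set_option maxHeartbeats 1000000 in
lemma kvec_4 : kvec 4 = 0 := by
  rw [kvec, Bform, phi_eval, herm_phi]
  simp (config := {decide := true}) [Γl4, W, C, εspinor, wedgeSign_eval,
    LinearMap.add_apply, LinearMap.neg_apply, LinearMap.sub_apply, LinearMap.smul_apply,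
    Pi.add_apply, Pi.neg_apply, Pi.sub_apply, Pi.smul_apply,
    LinearMap.coe_mk, AddHom.coe_mk]
  all_goals norm_num

set_option maxHeartbeats 1000000 in
lemma kvec_5 : kvec 5 = (-2) := by
  rw [kvec, Bform, phi_eval, herm_phi]
  simp (config := {decide := true}) [Γl5, W, C, εspinor, wedgeSign_eval,
    LinearMap.add_apply, LinearMap.neg_apply, LinearMap.sub_apply, LinearMap.smul_apply,
    Pi.add_apply, Pi.neg_apply, Pi.sub_apply, Pi.smul_apply,
    LinearMap.coe_mk, AddHom.coe_mk]
  all_goals norm_num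

set_option maxHeartbeats 1000000 in
lemma kvec_6 : kvec 6 = 0 := by
  rw [kvec, Bform, phi_eval, herm_phi]
  simp (config := {decide := true}) [Γl6, W, C, εspinor, wedgeSign_eval,
    LinearMap.add_apply, LinearMap.neg_apply, LinearMap.sub_apply, LinearMap.smul_apply,
    Pi.add_apply, Pi.neg_apply, Pi.sub_apply, Pi.smul_apply,
    LinearMap.coe_mk, AddHom.coe_mk]
  all_goals norm_num

set_option maxHeartbeats 1000000 in
lemma kvec_7 : kvec 7 = 0 := by
  rw [kvec, Bform, phi_eval, herm_phi]
  simp (config := {decide := true}) [Γl7, W, C, εspinor, wedgeSign_eval,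
    LinearMap.add_apply, LinearMap.neg_apply, LinearMap.sub_apply, LinearMap.smul_apply,
    Pi.add_apply, Pi.neg_apply, Pi.sub_apply, Pi.smul_apply,
    LinearMap.coe_mk, AddHom.coe_mk]
  all_goals norm_num

set_option maxHeartbeats 1000000 in
lemma kvec_8 : kvec 8 = 0 := by
  rw [kvec, Bform, phi_eval, herm_phi]
  simp (config := {decide := true}) [Γl8, W, C, εspinor, wedgeSign_eval,
    LinearMap.add_apply, LinearMap.neg_apply, LinearMap.sub_apply, LinearMap.smul_apply,
    Pi.add_apply, Pi.neg_apply, Pi.sub_apply, Pi.smul_apply,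
    LinearMap.coe_mk, AddHom.coe_mk]
  all_goals norm_num

set_option maxHeartbeats 1000000 in
lemma kvec_9 : kvec 9 = 0 := by
  rw [kvec, Bform, phi_eval, herm_phi]
  simp (config := {decide := true}) [Γl9, W, C, εspinor, wedgeSign_eval,
    LinearMap.add_apply, LinearMap.neg_apply, LinearMap.sub_apply, LinearMap.smul_apply,
    Pi.add_apply, Pi.neg_apply, Pi.sub_apply, Pi.smul_apply,
    LinearMap.coe_mk, AddHom.coe_mk]
/-- For `ε = 1 + e₁∧e₂∧e₃∧e₄`, the one-form bilinear
`k_A = B(ε, Γ_A ε)` is real, nonzero, and null with respect to the Minkowski metric: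
its only possibly nonvanishing components are `k₀` and `k₅`, these satisfy
`k₅ = −k₀ ≠ 0`, and hence `η^{AB} k_A k_B = −k₀² + k₅² = 0`. -/
theorem killing_vector_bilinear_null :
    (∀ A : Fin 10, (kvec A).im = 0) ∧
    (∀ A : Fin 10, A ≠ 0 → A ≠ 5 → kvec A = 0) ∧
    kvec 5 = - kvec 0 ∧
    kvec 0 ≠ 0 ∧
    - (kvec 0) ^ 2 + (kvec 5) ^ 2 = 0 := by
  refine ⟨?_, ?_, ?_, ?_, ?_⟩
  · intro A
    fin_cases A <;>
      simp [kvec_0, kvec_1, kvec_2, kvec_3, kvec_4, kvec_5, kvec_6, kvec_7, kvec_8, kvec_9]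
  · intro A h0 h5
    fin_cases A <;>
      simp_all [kvec_1, kvec_2, kvec_3, kvec_4, kvec_6, kvec_7, kvec_8, kvec_9]
  · rw [kvec_5, kvec_0]
  · rw [kvec_0]; norm_num
  · rw [kvec_5, kvec_0]; ring
end

section
/- For every ρ > 0, the function h : ℝ⁴ → ℝ defined by h(x) = 1 + 4(‖x‖² + 2ρ²)/(‖x‖² + ρ²)² is smooth on all of ℝ⁴ and satisfies Δh(x) = −96 ρ⁴ / (‖x‖² + ρ²)⁴ for every x ∈ ℝ⁴, where Δ is the Euclidean Laplacian on ℝ⁴. In particular −Δh equals one half of the instanton density 192 ρ⁴/(‖x‖²+ρ²)⁴ of a single SU(2) anti-self-dual instanton of size ρ, so h solves the half-supersymmetric heterotic string field equation −∇²h − ½η_{ab}F^a_{ij}F^{b ij} = 0 on ℝ⁴. -/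
noncomputable def lap (f : EuclideanSpace ℝ (Fin 4) → ℝ)
    (x : EuclideanSpace ℝ (Fin 4)) : ℝ :=
  ∑ i : Fin 4,
    fderiv ℝ (fun y => fderiv ℝ f y (EuclideanSpace.single i 1)) x
      (EuclideanSpace.single i 1)

section aux

variable (ρ : ℝ)

/-- radial profile -/
noncomputable def gP (s : ℝ) : ℝ := 1 + 4 * (s + 2 * ρ ^ 2) / (s + ρ ^ 2) ^ 2
noncomputable def gP1 (s : ℝ) : ℝ := (-4 * (s + ρ ^ 2) - 8 * ρ ^ 2) / (s + ρ ^ 2) ^ 3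
noncomputable def gP2 (s : ℝ) : ℝ := (8 * (s + ρ ^ 2) + 24 * ρ ^ 2) / (s + ρ ^ 2) ^ 4

lemma hasDerivAt_gP {s : ℝ} (hu : s + ρ ^ 2 ≠ 0) :
    HasDerivAt (gP ρ) (gP1 ρ s) s := by
  have hnum : HasDerivAt (fun s : ℝ => 4 * (s + 2 * ρ ^ 2)) 4 s := by
    simpa using ((hasDerivAt_id s).add_const (2 * ρ ^ 2)).const_mul 4
  have hden : HasDerivAt (fun s : ℝ => (s + ρ ^ 2) ^ 2)
      (2 * (s + ρ ^ 2) ^ 1 * 1) s :=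
    ((hasDerivAt_id s).add_const (ρ ^ 2)).pow 2
  have h := (hnum.div hden (pow_ne_zero 2 hu)).const_add 1
  refine h.congr_deriv ?_
  unfold gP1
  field_simp
  ring

lemma hasDerivAt_gP1 {s : ℝ} (hu : s + ρ ^ 2 ≠ 0) :
    HasDerivAt (gP1 ρ) (gP2 ρ s) s := by
  have hnum : HasDerivAt (fun s : ℝ => -4 * (s + ρ ^ 2) - 8 * ρ ^ 2) (-4) s := by
    simpa using (((hasDerivAt_id s).add_const (ρ ^ 2)).const_mul (-4)).sub_const (8 * ρ ^ 2)
  have hden : HasDerivAt (fun s : ℝ => (s + ρ ^ 2) ^ 3)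
      (3 * (s + ρ ^ 2) ^ 2 * 1) s :=
    ((hasDerivAt_id s).add_const (ρ ^ 2)).pow 3
  have h := hnum.div hden (pow_ne_zero 3 hu)
  refine h.congr_deriv ?_
  unfold gP2
  field_simp
  ring

end aux

/-- For every `ρ > 0`, the function
`h(x) = 1 + 4(‖x‖² + 2ρ²)/(‖x‖² + ρ²)²` is smooth on all of `ℝ⁴` and satisfies
`Δh(x) = −96 ρ⁴ / (‖x‖² + ρ²)⁴`.  In particular `−Δh` equals one half of the instanton
density `192 ρ⁴/(‖x‖²+ρ²)⁴` of a single `SU(2)` anti-self-dual instanton of size `ρ`,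
so `h` solves the half-supersymmetric heterotic field equation
`−∇²h − ½ η_{ab} F^a_{ij} F^{b ij} = 0` on `ℝ⁴`. -/
theorem bpst_dilaton_solution (ρ : ℝ) (hρ : 0 < ρ)
    (h : EuclideanSpace ℝ (Fin 4) → ℝ)
    (hdef : ∀ x, h x = 1 + 4 * (‖x‖ ^ 2 + 2 * ρ ^ 2) / (‖x‖ ^ 2 + ρ ^ 2) ^ 2) :
    ContDiff ℝ (⊤ : ℕ∞) h ∧
    (∀ x, lap h x = -96 * ρ ^ 4 / (‖x‖ ^ 2 + ρ ^ 2) ^ 4) ∧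
    (∀ x, - lap h x - (1 / 2) * (192 * ρ ^ 4 / (‖x‖ ^ 2 + ρ ^ 2) ^ 4) = 0) := by
  have hfe : h = fun x => gP ρ (‖x‖ ^ 2) := funext fun x => by rw [hdef]; rfl
  have hu : ∀ x : EuclideanSpace ℝ (Fin 4), ‖x‖ ^ 2 + ρ ^ 2 ≠ 0 := fun x => by
    positivity
  -- first derivative of h
  have hD1 : ∀ x : EuclideanSpace ℝ (Fin 4),
      HasFDerivAt h (gP1 ρ (‖x‖ ^ 2) • (2 • innerSL ℝ x)) x := by
    intro x
    rw [hfe]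
    exact (hasDerivAt_gP ρ (hu x)).comp_hasFDerivAt (f := fun x : EuclideanSpace ℝ (Fin 4) => ‖x‖ ^ 2) x
      (hasStrictFDerivAt_norm_sq x).hasFDerivAt
  -- the directional derivative function
  have hA : ∀ (i : Fin 4) (y : EuclideanSpace ℝ (Fin 4)),
      fderiv ℝ h y (EuclideanSpace.single i 1) = gP1 ρ (‖y‖ ^ 2) * (2 * y i) := by
    intro i y
    rw [(hD1 y).fderiv]
    simp [EuclideanSpace.inner_single_right, mul_comm]
  have key : ∀ x : EuclideanSpace ℝ (Fin 4),
      lap h x = 8 * gP1 ρ (‖x‖ ^ 2) + 4 * gP2 ρ (‖x‖ ^ 2) * ‖x‖ ^ 2 := by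
    intro x
    have hterm : ∀ i : Fin 4,
        fderiv ℝ (fun y => fderiv ℝ h y (EuclideanSpace.single i 1)) x
          (EuclideanSpace.single i 1)
        = 2 * gP1 ρ (‖x‖ ^ 2) + 4 * gP2 ρ (‖x‖ ^ 2) * (x i) ^ 2 := by
      intro i
      have hfun : (fun y => fderiv ℝ h y (EuclideanSpace.single i 1))
          = fun y => gP1 ρ (‖y‖ ^ 2) * (2 * y i) := funext (hA i)
      rw [hfun]
      have h1 : HasFDerivAt (fun y : EuclideanSpace ℝ (Fin 4) => gP1 ρ (‖y‖ ^ 2))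
          (gP2 ρ (‖x‖ ^ 2) • (2 • innerSL ℝ x)) x :=
        (hasDerivAt_gP1 ρ (hu x)).comp_hasFDerivAt (f := fun x : EuclideanSpace ℝ (Fin 4) => ‖x‖ ^ 2) x
          (hasStrictFDerivAt_norm_sq x).hasFDerivAt
      have h2 : HasFDerivAt (fun y : EuclideanSpace ℝ (Fin 4) => 2 * y i)
          ((2 : ℝ) • (EuclideanSpace.proj i : EuclideanSpace ℝ (Fin 4) →L[ℝ] ℝ)) x := by
        exact ((EuclideanSpace.proj i :
          EuclideanSpace ℝ (Fin 4) →L[ℝ] ℝ).hasFDerivAt (x := x)).const_mul (2 : ℝ)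
      have h3 : HasFDerivAt (fun y : EuclideanSpace ℝ (Fin 4) => gP1 ρ (‖y‖ ^ 2) * (2 * y i)) _ x :=
        h1.mul h2
      rw [h3.fderiv]
      simp [EuclideanSpace.inner_single_right, EuclideanSpace.single_apply]
      ring
    unfold lap
    rw [Finset.sum_congr rfl fun i _ => hterm i]
    rw [Finset.sum_add_distrib]
    simp only [Finset.sum_const, Finset.card_univ, Fintype.card_fin, nsmul_eq_mul,
      ← Finset.mul_sum]
    have hnorm : ∑ i : Fin 4, (x i) ^ 2 = ‖x‖ ^ 2 := by
      rw [← real_inner_self_eq_norm_sq]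
      simp only [PiLp.inner_apply, pow_two, RCLike.inner_apply, conj_trivial]
    rw [hnorm]
    ring
  have hlap : ∀ x, lap h x = -96 * ρ ^ 4 / (‖x‖ ^ 2 + ρ ^ 2) ^ 4 := by
    intro x
    rw [key x]
    unfold gP1 gP2
    field_simp
    ring
  refine ⟨?_, hlap, fun x => by rw [hlap x]; ring⟩
  rw [hfe]
  have hsm : ContDiff ℝ (⊤ : ℕ∞) fun x : EuclideanSpace ℝ (Fin 4) => ‖x‖ ^ 2 :=
    contDiff_norm_sq ℝ
  unfold gP
  exact contDiff_const.add
    ((contDiff_const.mul (hsm.add contDiff_const)).div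
      ((hsm.add contDiff_const).pow 2) fun x => pow_ne_zero 2 (hu x))
end

section
/- For any finite collection of centres x₁,…,x_ν ∈ ℝ⁴ and sizes ρ₁,…,ρ_ν > 0, the multi-instanton function h : ℝ⁴ → ℝ, h(x) = 1 + Σ_{a=1}^{ν} 4(‖x − x_a‖² + 2ρ_a²)/(‖x − x_a‖² + ρ_a²)², is smooth on all of ℝ⁴ and satisfies Δh(x) = − Σ_{a=1}^{ν} 96 ρ_a⁴ / (‖x − x_a‖² + ρ_a²)⁴ for every x ∈ ℝ⁴. -/
open scoped RealInnerProductSpace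

namespace MultiInstAux

noncomputable def F (p s : ℝ) : ℝ := 4 * (s + 2 * p) / (s + p) ^ 2
noncomputable def F1 (p s : ℝ) : ℝ := (-4 * s - 12 * p) / (s + p) ^ 3
noncomputable def F2 (p s : ℝ) : ℝ := (8 * s + 32 * p) / (s + p) ^ 4

lemma hasDerivAt_F {p s : ℝ} (hp : 0 < s + p) : HasDerivAt (F p) (F1 p s) s := by
  have hne : (s + p) ≠ 0 := ne_of_gt hp
  have hnum : HasDerivAt (fun t : ℝ => 4 * (t + 2 * p)) 4 s := by
    simpa using ((hasDerivAt_id s).add_const (2 * p)).const_mul 4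
  have hden : HasDerivAt (fun t : ℝ => (t + p) ^ 2) (2 * (s + p)) s := by
    simpa using ((hasDerivAt_id s).add_const p).fun_pow 2
  have := hnum.fun_div hden (by positivity)
  refine this.congr_deriv ?_
  rw [F1]
  field_simp
  ring

lemma hasDerivAt_F1 {p s : ℝ} (hp : 0 < s + p) : HasDerivAt (F1 p) (F2 p s) s := by
  have hne : (s + p) ≠ 0 := ne_of_gt hp
  have hnum : HasDerivAt (fun t : ℝ => -4 * t - 12 * p) (-4) s := by
    simpa using ((hasDerivAt_id s).const_mul (-4)).sub_const (12 * p)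
  have hden : HasDerivAt (fun t : ℝ => (t + p) ^ 3) (3 * (s + p) ^ 2) s := by
    simpa using ((hasDerivAt_id s).add_const p).fun_pow 3
  have := hnum.fun_div hden (by positivity)
  refine this.congr_deriv ?_
  rw [F2]
  field_simp
  ring

lemma key_algebra {p s : ℝ} (hp : 0 < s + p) :
    8 * F1 p s + 4 * F2 p s * s = -(96 * p ^ 2 / (s + p) ^ 4) := by
  have hne : (s + p) ≠ 0 := ne_of_gt hp
  rw [F1, F2]
  field_simp
  ring

end MultiInstAux

open MultiInstAux in
/-- For any finite collection of centres `x₁,…,x_ν ∈ ℝ⁴` and sizes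
`ρ₁,…,ρ_ν > 0`, the multi-instanton function
`h(x) = 1 + Σₐ 4(‖x − xₐ‖² + 2ρₐ²)/(‖x − xₐ‖² + ρₐ²)²` is smooth on all of `ℝ⁴` and
satisfies `Δh(x) = − Σₐ 96 ρₐ⁴ / (‖x − xₐ‖² + ρₐ²)⁴` for every `x ∈ ℝ⁴`. -/
theorem multi_instanton_dilaton_solution (ν : ℕ)
    (c : Fin ν → EuclideanSpace ℝ (Fin 4)) (ρ : Fin ν → ℝ) (hρ : ∀ a, 0 < ρ a)
    (h : EuclideanSpace ℝ (Fin 4) → ℝ)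
    (hdef : ∀ x, h x =
      1 + ∑ a : Fin ν,
            4 * (‖x - c a‖ ^ 2 + 2 * ρ a ^ 2) / (‖x - c a‖ ^ 2 + ρ a ^ 2) ^ 2) :
    ContDiff ℝ (⊤ : ℕ∞) h ∧
    (∀ x, lap h x = - ∑ a : Fin ν, 96 * ρ a ^ 4 / (‖x - c a‖ ^ 2 + ρ a ^ 2) ^ 4) := by
  classical
  have hEq : h = fun x => 1 + ∑ a : Fin ν, F (ρ a ^ 2) (‖x - c a‖ ^ 2) := by
    funext x; rw [hdef x]; rfl
  have hpos : ∀ (a : Fin ν) (y : EuclideanSpace ℝ (Fin 4)), 0 < ‖y - c a‖ ^ 2 + ρ a ^ 2 := by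
    intro a y
    have := hρ a
    positivity
  -- derivative of the squared norm
  have hq : ∀ (a : Fin ν) (y : EuclideanSpace ℝ (Fin 4)),
      HasFDerivAt (fun z : EuclideanSpace ℝ (Fin 4) => ‖z - c a‖ ^ 2)
        ((2 : ℕ) • ((innerSL ℝ (y - c a)).comp (ContinuousLinearMap.id ℝ (EuclideanSpace ℝ (Fin 4))))) y := by
    intro a y
    exact ((hasFDerivAt_id y).sub_const (c a)).norm_sq
  -- smoothness
  have hsmooth : ContDiff ℝ (⊤ : ℕ∞) h := by
    rw [hEq]
    refine contDiff_const.add (ContDiff.sum fun a _ => ?_)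
    have hqc : ContDiff ℝ (⊤ : ℕ∞) (fun x : EuclideanSpace ℝ (Fin 4) => ‖x - c a‖ ^ 2) :=
      ContDiff.norm_sq ℝ (contDiff_id.sub contDiff_const)
    refine ContDiff.div ?_ ?_ ?_
    · exact contDiff_const.mul (hqc.add contDiff_const)
    · exact (hqc.add contDiff_const).pow 2
    · intro x
      exact pow_ne_zero _ (ne_of_gt (hpos a x))
  refine ⟨hsmooth, fun x => ?_⟩
  -- first derivative of h
  have hD : ∀ y : EuclideanSpace ℝ (Fin 4), HasFDerivAt h
      (∑ a : Fin ν, F1 (ρ a ^ 2) (‖y - c a‖ ^ 2) •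
        ((2 : ℕ) • ((innerSL ℝ (y - c a)).comp (ContinuousLinearMap.id ℝ (EuclideanSpace ℝ (Fin 4)))))) y := by
    intro y
    rw [hEq]
    have : HasFDerivAt (fun x : EuclideanSpace ℝ (Fin 4) => ∑ a : Fin ν, F (ρ a ^ 2) (‖x - c a‖ ^ 2))
        (∑ a : Fin ν, F1 (ρ a ^ 2) (‖y - c a‖ ^ 2) •
          ((2 : ℕ) • ((innerSL ℝ (y - c a)).comp (ContinuousLinearMap.id ℝ (EuclideanSpace ℝ (Fin 4)))))) y := by
      refine HasFDerivAt.fun_sum fun a _ => ?_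
      exact (hasDerivAt_F (hpos a y)).comp_hasFDerivAt y (hq a y)
    simpa using this.const_add 1
  -- directional first derivative
  have hdir : ∀ (i : Fin 4) (y : EuclideanSpace ℝ (Fin 4)),
      fderiv ℝ h y (EuclideanSpace.single i 1)
        = ∑ a : Fin ν, 2 * F1 (ρ a ^ 2) (‖y - c a‖ ^ 2) * (y - c a) i := by
    intro i y
    rw [(hD y).fderiv]
    simp only [ContinuousLinearMap.coe_sum', Finset.sum_apply,
      ContinuousLinearMap.coe_smul', Pi.smul_apply, ContinuousLinearMap.coe_comp',
      Function.comp_apply, ContinuousLinearMap.coe_id', id_eq, innerSL_apply_apply]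
    refine Finset.sum_congr rfl fun a _ => ?_
    have : ⟪y - c a, (EuclideanSpace.single i (1:ℝ))⟫ = (y - c a) i := by
      rw [EuclideanSpace.inner_single_right]
      simp
    rw [this]
    simp [smul_eq_mul]
    ring
  -- second directional derivative
  have hsecond : ∀ (i : Fin 4),
      fderiv ℝ (fun y => fderiv ℝ h y (EuclideanSpace.single i 1)) x
          (EuclideanSpace.single i 1)
        = ∑ a : Fin ν, (2 * F1 (ρ a ^ 2) (‖x - c a‖ ^ 2)
            + 4 * F2 (ρ a ^ 2) (‖x - c a‖ ^ 2) * ((x - c a) i) ^ 2) := by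
    intro i
    have hfun : (fun y => fderiv ℝ h y (EuclideanSpace.single i 1))
        = fun y => ∑ a : Fin ν, 2 * F1 (ρ a ^ 2) (‖y - c a‖ ^ 2) * (y - c a) i := by
      funext y; exact hdir i y
    rw [hfun]
    -- per-term derivatives
    have hterm : ∀ a : Fin ν, HasFDerivAt
        (fun y : EuclideanSpace ℝ (Fin 4) => 2 * F1 (ρ a ^ 2) (‖y - c a‖ ^ 2) * (y - c a) i)
        ((2 * F1 (ρ a ^ 2) (‖x - c a‖ ^ 2)) •
            ((EuclideanSpace.proj i : EuclideanSpace ℝ (Fin 4) →L[ℝ] ℝ).comp (ContinuousLinearMap.id ℝ (EuclideanSpace ℝ (Fin 4))))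
          + ((x - c a) i) •
            ((2 * F2 (ρ a ^ 2) (‖x - c a‖ ^ 2)) •
              ((2 : ℕ) • ((innerSL ℝ (x - c a)).comp (ContinuousLinearMap.id ℝ (EuclideanSpace ℝ (Fin 4))))))) x := by
      intro a
      have hA : HasFDerivAt (fun y : EuclideanSpace ℝ (Fin 4) => 2 * F1 (ρ a ^ 2) (‖y - c a‖ ^ 2))
          ((2 * F2 (ρ a ^ 2) (‖x - c a‖ ^ 2)) •
            ((2 : ℕ) • ((innerSL ℝ (x - c a)).comp (ContinuousLinearMap.id ℝ (EuclideanSpace ℝ (Fin 4)))))) x := by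
        have hsc : HasDerivAt (fun t => 2 * F1 (ρ a ^ 2) t)
            (2 * F2 (ρ a ^ 2) (‖x - c a‖ ^ 2)) (‖x - c a‖ ^ 2) :=
          (hasDerivAt_F1 (hpos a x)).const_mul 2
        exact hsc.comp_hasFDerivAt (h₂ := fun t => 2 * F1 (ρ a ^ 2) t) x (hq a x)
      have hB : HasFDerivAt (fun y : EuclideanSpace ℝ (Fin 4) => (y - c a) i)
          ((EuclideanSpace.proj i : EuclideanSpace ℝ (Fin 4) →L[ℝ] ℝ).comp (ContinuousLinearMap.id ℝ (EuclideanSpace ℝ (Fin 4)))) x := by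
        exact ((EuclideanSpace.proj i : EuclideanSpace ℝ (Fin 4) →L[ℝ] ℝ).hasFDerivAt).comp x
          ((hasFDerivAt_id x).sub_const (c a))
      exact hA.mul hB
    have hsum := HasFDerivAt.fun_sum (fun a (_ : a ∈ Finset.univ) => hterm a)
    rw [hsum.fderiv]
    simp only [ContinuousLinearMap.coe_sum', Finset.sum_apply,
      ContinuousLinearMap.add_apply, ContinuousLinearMap.coe_smul', Pi.smul_apply,
      ContinuousLinearMap.coe_comp', Function.comp_apply, ContinuousLinearMap.coe_id',
      id_eq, innerSL_apply_apply, PiLp.proj_apply]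
    refine Finset.sum_congr rfl fun a _ => ?_
    have h1 : (EuclideanSpace.single i (1:ℝ)) i = 1 := by
      simp [EuclideanSpace.single_apply]
    have h2 : ⟪x - c a, (EuclideanSpace.single i (1:ℝ))⟫ = (x - c a) i := by
      rw [EuclideanSpace.inner_single_right]; simp
    rw [h1, h2]
    simp [smul_eq_mul]
    ring
  -- assemble the Laplacian
  have hsumsq : ∀ a : Fin ν, ∑ i : Fin 4, ((x - c a) i) ^ 2 = ‖x - c a‖ ^ 2 := by
    intro a
    rw [PiLp.norm_sq_eq_of_L2]
    refine Finset.sum_congr rfl fun i _ => ?_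
    rw [Real.norm_eq_abs, sq_abs]
  rw [lap]
  calc ∑ i : Fin 4, fderiv ℝ (fun y => fderiv ℝ h y (EuclideanSpace.single i 1)) x
          (EuclideanSpace.single i 1)
      = ∑ i : Fin 4, ∑ a : Fin ν, (2 * F1 (ρ a ^ 2) (‖x - c a‖ ^ 2)
            + 4 * F2 (ρ a ^ 2) (‖x - c a‖ ^ 2) * ((x - c a) i) ^ 2) := by
        exact Finset.sum_congr rfl fun i _ => hsecond i
    _ = ∑ a : Fin ν, ∑ i : Fin 4, (2 * F1 (ρ a ^ 2) (‖x - c a‖ ^ 2)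
            + 4 * F2 (ρ a ^ 2) (‖x - c a‖ ^ 2) * ((x - c a) i) ^ 2) := Finset.sum_comm
    _ = ∑ a : Fin ν, (8 * F1 (ρ a ^ 2) (‖x - c a‖ ^ 2)
            + 4 * F2 (ρ a ^ 2) (‖x - c a‖ ^ 2) * ‖x - c a‖ ^ 2) := by
        refine Finset.sum_congr rfl fun a _ => ?_
        rw [Finset.sum_add_distrib, Finset.sum_const, ← Finset.mul_sum, hsumsq a]
        simp
        ring
    _ = - ∑ a : Fin ν, 96 * ρ a ^ 4 / (‖x - c a‖ ^ 2 + ρ a ^ 2) ^ 4 := by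
        rw [← Finset.sum_neg_distrib]
        refine Finset.sum_congr rfl fun a _ => ?_
        have := key_algebra (hpos a x)
        rw [this]
        ring_nf
end
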